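/- arXiv:1609.06733 — 3 statements merged into one kernel-verified Lean document; each statement's English description precedes it below -/
import Mathlib

section
/- Let γ, δ, z, w be complex numbers with |γ| < 1 and |δ| = 1. Set δ' = (conj(γ) − δ)/(1 − γ·δ), g = |1 − γ·δ|²/(2·Re(1 − γ·δ)), and r = −Im(1 − γ·δ)/Re(1 − γ·δ). Define f = (γ + z·w)/(1 + conj(γ)·z·w), h = (1 − δ·f)/(1 + δ·z·f), and h' = (1 − δ'·w)/(1 + δ'·z·w). Assume the denominators 1 + conj(γ)·z·w, 1 + δ·z·f, 1 + δ'·z·w, and (1 + i·r) − (1 − i·r)·z + 2·(1 − g)·z·h' are all nonzero. Then h = 2g / ((1 + i·r) − (1 − i·r)·z + 2·(1 − g)·z·h'). -/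
open Complex

/-- One step of Wall's transformation of the Schur algorithm into a
continued fraction: with `f = (γ + zw)/(1 + conj γ · zw)` (Schur step),
`h = (1 - δf)/(1 + δzf)` (Wall's Ansatz), `δ' = (conj γ - δ)/(1 - γδ)`,
`h' = (1 - δ'w)/(1 + δ'zw)`, and `g, r` Wall's parameters of `1 - γδ`, one has
`h = 2g / ((1 + ir) - (1 - ir)z + 2(1 - g)z h')`. -/
theorem wall_continued_fraction_step (γ δ z w : ℂ)
    (hγ : ‖γ‖ < 1) (hδ : ‖δ‖ = 1)
    (δ' : ℂ) (hδ' : δ' = ((starRingEnd ℂ) γ - δ) / (1 - γ * δ))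
    (g r : ℝ)
    (hg : g = ‖1 - γ * δ‖ ^ 2 / (2 * (1 - γ * δ).re))
    (hr : r = -((1 - γ * δ).im / (1 - γ * δ).re))
    (f h h' : ℂ)
    (hf : f = (γ + z * w) / (1 + (starRingEnd ℂ) γ * z * w))
    (hh : h = (1 - δ * f) / (1 + δ * z * f))
    (hh' : h' = (1 - δ' * w) / (1 + δ' * z * w))
    (hd1 : 1 + (starRingEnd ℂ) γ * z * w ≠ 0)
    (hd2 : 1 + δ * z * f ≠ 0)
    (hd3 : 1 + δ' * z * w ≠ 0)
    (hd4 : (1 + I * (r : ℂ)) - (1 - I * (r : ℂ)) * z + 2 * (1 - (g : ℂ)) * z * h' ≠ 0) :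
    h = 2 * (g : ℂ) / ((1 + I * (r : ℂ)) - (1 - I * (r : ℂ)) * z + 2 * (1 - (g : ℂ)) * z * h') := by
  set c := (starRingEnd ℂ) γ with hc
  have hδ0 : δ ≠ 0 := by
    intro h0; rw [h0] at hδ; simp at hδ
  have hure : 0 < (1 - γ * δ).re := by
    have h1 : (γ * δ).re ≤ ‖γ * δ‖ := Complex.re_le_norm _
    have h2 : ‖γ * δ‖ < 1 := by rw [norm_mul, hδ, mul_one]; exact hγ
    have h3 : (1 - γ * δ).re = 1 - (γ * δ).re := by simp
    linarith
  have hu0 : (1 : ℂ) - γ * δ ≠ 0 := by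
    intro h0; rw [h0] at hure; simp at hure
  have hδc : (starRingEnd ℂ) δ = δ⁻¹ := by
    have h1 : δ * (starRingEnd ℂ) δ = 1 := by
      rw [Complex.mul_conj, ← Complex.sq_norm, hδ]; norm_num
    field_simp
    linear_combination h1
  have hinv : δ * δ⁻¹ = 1 := mul_inv_cancel₀ hδ0
  have hconj : (starRingEnd ℂ) (1 - γ * δ) = 1 - c * δ⁻¹ := by
    rw [map_sub, map_one, map_mul, hδc, ← hc]
  have hadd : (((2 * (1 - γ * δ).re : ℝ)) : ℂ) = (1 - γ * δ) + (1 - c * δ⁻¹) := by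
    rw [← hconj, Complex.add_conj]
  have hs0 : (1 - γ * δ) + (1 - c * δ⁻¹) ≠ 0 := by
    rw [← hadd]
    simp only [ne_eq, Complex.ofReal_eq_zero]
    intro h0; linarith
  have hs2 : 2 * δ - c - γ * δ ^ 2 ≠ 0 := by
    have heq : 2 * δ - c - γ * δ ^ 2 = δ * ((1 - γ * δ) + (1 - c * δ⁻¹)) := by
      field_simp; ring
    rw [heq]; exact mul_ne_zero hδ0 hs0
  have hre0 : (((1 - γ * δ).re : ℝ) : ℂ) ≠ 0 := by
    simp only [ne_eq, Complex.ofReal_eq_zero]; linarith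
  -- cast identity for g
  have habs2 : ((‖1 - γ * δ‖ ^ 2 : ℝ) : ℂ)
      = (1 - γ * δ) * (1 - c * δ⁻¹) := by
    rw [← hconj, Complex.sq_norm, Complex.mul_conj]
  have hgc : (g : ℂ) = ((1 - γ * δ) * (δ - c)) / (2 * δ - c - γ * δ ^ 2) := by
    rw [hg, Complex.ofReal_div, habs2, hadd]
    rw [div_eq_div_iff hs0 hs2]
    linear_combination (-(1 - γ * δ) ^ 2 * c) * hinv
  -- cast identity for r
  have hirc0 : ∀ u : ℂ, u.re ≠ 0 → I * ((-(u.im / u.re) : ℝ) : ℂ)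
      = -(u - (starRingEnd ℂ) u) / (u + (starRingEnd ℂ) u) := by
    intro u hu
    rw [Complex.sub_conj, Complex.add_conj]
    push_cast
    field_simp
  have hirc : I * (r : ℂ) = -(c - γ * δ ^ 2) / (2 * δ - c - γ * δ ^ 2) := by
    rw [hr, hirc0 (1 - γ * δ) (by exact_mod_cast hre0), hconj,
      div_eq_div_iff hs0 hs2]
    linear_combination (-2 * c * (1 - γ * δ)) * hinv
  -- explicit forms of h and h'
  rw [hf] at hh hd2
  rw [hδ'] at hh' hd3
  have hkeyB : (1 : ℂ) + δ * z * ((γ + z * w) / (1 + c * z * w))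
      = (1 + c * z * w + δ * z * (γ + z * w)) / (1 + c * z * w) := by
    rw [mul_div_assoc', add_div' _ _ _ hd1, one_mul]
  have hB2 : 1 + c * z * w + δ * z * (γ + z * w) ≠ 0 := by
    intro h0; apply hd2; rw [hkeyB, h0, zero_div]
  have hh2 : h = ((1 + c * z * w) - δ * (γ + z * w))
      / (1 + c * z * w + δ * z * (γ + z * w)) := by
    rw [hh, hkeyB, mul_div_assoc', sub_div' hd1, one_mul, div_div_div_cancel_right₀ hd1]
  have hkeyE : (1 : ℂ) + (c - δ) / (1 - γ * δ) * z * w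
      = ((1 - γ * δ) + (c - δ) * z * w) / (1 - γ * δ) := by
    rw [div_mul_eq_mul_div, div_mul_eq_mul_div, add_div' _ _ _ hu0, one_mul]
  have hE : (1 - γ * δ) + (c - δ) * z * w ≠ 0 := by
    intro h0; apply hd3; rw [hkeyE, h0, zero_div]
  have hh'2 : h' = ((1 - γ * δ) - (c - δ) * w)
      / ((1 - γ * δ) + (c - δ) * z * w) := by
    rw [hh', hkeyE, div_mul_eq_mul_div, sub_div' hu0, one_mul, div_div_div_cancel_right₀ hu0]
  -- main computation
  rw [hirc, hgc] at hd4 ⊢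
  rw [eq_div_iff hd4, hh2, hh'2]
  have hs2' : δ * 2 - c - δ ^ 2 * γ ≠ 0 := by rwa [show δ * 2 - c - δ ^ 2 * γ = 2 * δ - c - γ * δ ^ 2 by ring]
  have hE' : 1 - δ * γ + z * w * (c - δ) ≠ 0 := by rwa [show 1 - δ * γ + z * w * (c - δ) = (1 - γ * δ) + (c - δ) * z * w by ring]
  have hB2' : 1 + c * z * w + z * δ * (γ + z * w) ≠ 0 := by rwa [show 1 + c * z * w + z * δ * (γ + z * w) = 1 + c * z * w + δ * z * (γ + z * w) by ring]
  field_simp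
  ring
end

section
/- Let s be a real number with s > −1/2 and s ≠ 0, and let n ≥ 0 be an integer. For x ∈ ℂ with x ≠ i define, for each integer m ≥ 0, R_m(x, s) = ∑_{k=0}^{m} [(−m)_k·(s)_k / ((2s)_k·k!)]·(2/(1 + i·x))^k, and set R_{−1} = 0. Then n·(x + i)·R_{n−1}(x, s) − 2·x·(s + n)·R_n(x, s) + (2s + n)·(x − i)·R_{n+1}(x, s) = 0. -/
set_option maxHeartbeats 1000000
open Complex Polynomial

noncomputable def pjC (s : ℝ) (m k : ℕ) : ℂ :=
  (ascPochhammer ℂ k).eval (-(m : ℂ)) * (ascPochhammer ℂ k).eval (s : ℂ) /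
    ((ascPochhammer ℂ k).eval (2 * (s : ℂ)) * (Nat.factorial k : ℂ))

lemma poch_succ_left_eval (k : ℕ) (a : ℂ) :
    (ascPochhammer ℂ (k+1)).eval a = a * (ascPochhammer ℂ k).eval (a+1) := by
  rw [ascPochhammer_succ_left]
  simp [eval_comp]

lemma poch_ne_zero {a : ℝ} (h0 : a ≠ 0) (h1 : -1 < a) (k : ℕ) :
    (ascPochhammer ℂ k).eval (a : ℂ) ≠ 0 := by
  induction k with
  | zero => simp
  | succ k ih =>
    rw [ascPochhammer_succ_eval]
    refine mul_ne_zero ih ?_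
    have h2 : ((a : ℂ) + k) = ((a + k : ℝ) : ℂ) := by push_cast; ring
    rw [h2]
    simp only [ne_eq, Complex.ofReal_eq_zero]
    rcases Nat.eq_zero_or_pos k with rfl | hk
    · simpa using h0
    · have : (1:ℝ) ≤ (k:ℝ) := by exact_mod_cast hk
      intro hc; linarith

lemma pj_pointwise (s : ℝ) (hs : -(1 / 2 : ℝ) < s) (hs0 : s ≠ 0) (m k : ℕ) :
    ((m : ℂ) + 1) * pjC s m k - ((s : ℂ) + (m : ℂ) + 1) * pjC s (m+1) k
      + (-((m : ℂ) + 1) * pjC s m (k+1) + 2 * ((s : ℂ) + (m : ℂ) + 1) * pjC s (m+1) (k+1)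
        - (2 * (s : ℂ) + (m : ℂ) + 1) * pjC s (m+2) (k+1)) = 0 := by
  have hsC : (s : ℂ) ≠ 0 := by exact_mod_cast hs0
  have hm1 : ((m : ℂ) + 1) ≠ 0 := by
    have h := (Nat.cast_ne_zero (R := ℂ)).mpr (Nat.succ_ne_zero m)
    push_cast at h; exact h
  have hS : (ascPochhammer ℂ k).eval (s : ℂ) ≠ 0 := poch_ne_zero hs0 (by linarith) k
  have hS2 : (ascPochhammer ℂ k).eval (2 * (s : ℂ)) ≠ 0 := by
    have h := poch_ne_zero (a := 2 * s) (by simpa using hs0) (by linarith) k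
    rwa [show ((2 * s : ℝ) : ℂ) = 2 * (s : ℂ) by push_cast; ring] at h
  have hsk : (s : ℂ) + k ≠ 0 := by
    rcases Nat.eq_zero_or_pos k with rfl | hk
    · simpa using hsC
    · rw [show (s : ℂ) + k = ((s + k : ℝ) : ℂ) by push_cast; ring]
      simp only [ne_eq, Complex.ofReal_eq_zero]
      have : (1:ℝ) ≤ (k:ℝ) := by exact_mod_cast hk
      intro hc; linarith
  have h2sk : 2 * (s : ℂ) + k ≠ 0 := by
    rcases Nat.eq_zero_or_pos k with rfl | hk
    · simpa using hsC
    · rw [show 2 * (s : ℂ) + k = ((2 * s + k : ℝ) : ℂ) by push_cast; ring]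
      simp only [ne_eq, Complex.ofReal_eq_zero]
      have : (1:ℝ) ≤ (k:ℝ) := by exact_mod_cast hk
      intro hc; linarith
  have hfk : ((Nat.factorial k : ℕ) : ℂ) ≠ 0 := Nat.cast_ne_zero.2 (Nat.factorial_ne_zero k)
  have hk1 : ((k : ℂ) + 1) ≠ 0 := by
    have h := (Nat.cast_ne_zero (R := ℂ)).mpr (Nat.succ_ne_zero k)
    push_cast at h; exact h
  -- relation between A = p k (-m) and B = p k (-(m+1))
  have hB2 : (ascPochhammer ℂ (k+1)).eval (-((m : ℂ) + 1))
      = (-((m : ℂ) + 1)) * (ascPochhammer ℂ k).eval (-(m : ℂ)) := by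
    rw [poch_succ_left_eval, show (-((m : ℂ) + 1) + 1) = -(m : ℂ) by ring]
  have h1 : (ascPochhammer ℂ (k+1)).eval (-((m : ℂ) + 1))
      = (ascPochhammer ℂ k).eval (-((m : ℂ) + 1)) * (-((m : ℂ) + 1) + k) :=
    ascPochhammer_succ_eval k _
  have hA : (ascPochhammer ℂ k).eval (-(m : ℂ))
      = -((ascPochhammer ℂ k).eval (-((m : ℂ) + 1)) * ((k : ℂ) - (m : ℂ) - 1)) / ((m : ℂ) + 1) := by
    rw [eq_div_iff hm1]
    linear_combination hB2 - h1
  have hC : (ascPochhammer ℂ (k+1)).eval (-((m : ℂ) + 2))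
      = (-((m : ℂ) + 2)) * (ascPochhammer ℂ k).eval (-((m : ℂ) + 1)) := by
    rw [poch_succ_left_eval, show (-((m : ℂ) + 2) + 1) = -((m : ℂ) + 1) by ring]
  simp only [pjC, Nat.factorial_succ, Nat.cast_mul, Nat.cast_add, Nat.cast_one, Nat.cast_ofNat]
  rw [hC]
  simp only [ascPochhammer_succ_eval]
  set A := (ascPochhammer ℂ k).eval (-(m : ℂ)) with hAdef
  set B := (ascPochhammer ℂ k).eval (-((m : ℂ) + 1)) with hBdef
  set PS := (ascPochhammer ℂ k).eval ((s : ℂ)) with hPSdef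
  set P2 := (ascPochhammer ℂ k).eval (2 * (s : ℂ)) with hP2def
  field_simp [hS, hS2, hsk, h2sk, hfk, hk1, hm1]
  rw [hA]
  field_simp [hm1]
  have hD : (s:ℂ)*2 + k ≠ 0 := by rwa [mul_comm] at h2sk
  field_simp [hD]
  ring

lemma pjC_zero_of_lt (s : ℝ) {j k : ℕ} (h : j < k) : pjC s j k = 0 := by
  simp [pjC, ascPochhammer_eval_neg_coe_nat_of_lt h]

lemma pj_ext (s : ℝ) (z : ℂ) (j N1 N2 : ℕ) (h : N1 ≤ N2) (hj : j < N1) :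
    (∑ k ∈ Finset.range N1, pjC s j k * z ^ k) = ∑ k ∈ Finset.range N2, pjC s j k * z ^ k := by
  refine Finset.sum_subset (Finset.range_subset_range.mpr h) ?_
  intro kk _ hkk
  simp only [Finset.mem_range, not_lt] at hkk
  rw [pjC_zero_of_lt s (by omega), zero_mul]

/-- The `x`-direction recurrence for `R_m(x, s) = ₂F₁(-m, s; 2s; 2/(1+ix))`
with `s > -1/2`, `s ≠ 0`. Indexing is shifted by one: `R (m+1)` stands for `R_m` of
the paper and `R 0 = R_{-1} = 0`. Then
`n(x+i)R_{n-1} - 2x(s+n)R_n + (2s+n)(x-i)R_{n+1} = 0`. -/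
theorem pseudo_jacobi_x_recurrence (s : ℝ) (hs : -(1 / 2) < s) (hs0 : s ≠ 0) (n : ℕ)
    (x : ℂ) (hx : x ≠ I)
    (R : ℕ → ℂ) (hR0 : R 0 = 0)
    (hR : ∀ m : ℕ, R (m + 1) = ∑ k ∈ Finset.range (m + 1),
      (ascPochhammer ℂ k).eval (-(m : ℂ)) * (ascPochhammer ℂ k).eval (s : ℂ) /
        ((ascPochhammer ℂ k).eval (2 * (s : ℂ)) * (Nat.factorial k : ℂ)) * (2 / (1 + I * x)) ^ k) :
    (n : ℂ) * (x + I) * R n - 2 * x * ((s : ℂ) + (n : ℂ)) * R (n + 1)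
      + (2 * (s : ℂ) + (n : ℂ)) * (x - I) * R (n + 2) = 0 := by
  have hsC : (s : ℂ) ≠ 0 := by exact_mod_cast hs0
  have hI : I * I = -1 := Complex.I_mul_I
  have h1x : (1 : ℂ) + I * x ≠ 0 := by
    intro h
    apply hx
    linear_combination (-I) * h + x * hI
  cases n with
  | zero =>
    have hR1 : R 1 = ∑ k ∈ Finset.range 1, pjC s 0 k * (2 / (1 + I * x)) ^ k := hR 0
    have hR2 : R 2 = ∑ k ∈ Finset.range 2, pjC s 1 k * (2 / (1 + I * x)) ^ k := hR 1
    simp only [Nat.cast_zero, zero_add, Nat.zero_add, zero_mul, Nat.reduceAdd]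
    rw [hR1, hR2]
    simp only [Finset.sum_range_succ, Finset.sum_range_zero, pjC, ascPochhammer_zero,
      ascPochhammer_one, eval_one, eval_X, Nat.factorial_zero, Nat.factorial_one,
      Nat.cast_one, Nat.cast_zero, pow_zero, pow_one, zero_add]
    field_simp
    have h1x' : (1:ℂ) + x * I ≠ 0 := by rwa [mul_comm] at h1x
    field_simp [h1x']
    linear_combination (-(2:ℂ) * x * (s:ℂ)) * hI
  | succ m =>
    have hR1 : R (m+1) = ∑ k ∈ Finset.range (m+1), pjC s m k * (2 / (1 + I * x)) ^ k := hR m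
    have hR2 : R (m+1+1) = ∑ k ∈ Finset.range (m+2), pjC s (m+1) k * (2 / (1 + I * x)) ^ k := hR (m+1)
    have hR3 : R (m+1+2) = ∑ k ∈ Finset.range (m+3), pjC s (m+2) k * (2 / (1 + I * x)) ^ k := hR (m+2)
    rw [hR1, hR2, hR3]
    set z : ℂ := 2 / (1 + I * x) with hzdef
    rw [pj_ext s z m (m+1) (m+3) (by omega) (by omega),
      pj_ext s z (m+1) (m+2) (m+3) (by omega) (by omega)]
    push_cast
    set S1 := ∑ k ∈ Finset.range (m+3), pjC s m k * z ^ k with hS1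
    set S2 := ∑ k ∈ Finset.range (m+3), pjC s (m+1) k * z ^ k with hS2
    set S3 := ∑ k ∈ Finset.range (m+3), pjC s (m+2) k * z ^ k with hS3
    have hz0 : z ≠ 0 := div_ne_zero two_ne_zero h1x
    have hzx : z * (1 + I * x) = 2 := div_mul_cancel₀ 2 h1x
    have key : ((m:ℂ)+1)*(z-1)*S1 - ((s:ℂ)+(m:ℂ)+1)*(z-2)*S2 - (2*(s:ℂ)+(m:ℂ)+1)*S3 = 0 := by
      set f : ℕ → ℂ := fun k => (-((m:ℂ)+1) * pjC s m k + 2*((s:ℂ)+(m:ℂ)+1) * pjC s (m+1) k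
        - (2*(s:ℂ)+(m:ℂ)+1) * pjC s (m+2) k) * z ^ k with hf
      calc ((m:ℂ)+1)*(z-1)*S1 - ((s:ℂ)+(m:ℂ)+1)*(z-2)*S2 - (2*(s:ℂ)+(m:ℂ)+1)*S3
          = ∑ k ∈ Finset.range (m+3), (f k - f (k+1)) := by
            rw [hS1, hS2, hS3, Finset.mul_sum, Finset.mul_sum, Finset.mul_sum,
              ← Finset.sum_sub_distrib, ← Finset.sum_sub_distrib]
            refine Finset.sum_congr rfl fun k _ => ?_
            simp only [hf]
            linear_combination z^(k+1) * pj_pointwise s hs hs0 m k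
        _ = f 0 - f (m+3) := Finset.sum_range_sub' f (m+3)
        _ = 0 := by
            have z1 : pjC s m (m+3) = 0 := pjC_zero_of_lt s (by omega)
            have z2 : pjC s (m+1) (m+3) = 0 := pjC_zero_of_lt s (by omega)
            have z3 : pjC s (m+2) (m+3) = 0 := pjC_zero_of_lt s (by omega)
            have p1 : pjC s m 0 = 1 := by simp [pjC]
            have p2 : pjC s (m+1) 0 = 1 := by simp [pjC]
            have p3 : pjC s (m+2) 0 = 1 := by simp [pjC]
            simp only [hf, z1, z2, z3, p1, p2, p3, pow_zero]
            ring
    have hmain : z * (((m:ℂ)+1)*(x+I)*S1 - 2*x*((s:ℂ)+((m:ℂ)+1))*S2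
        + (2*(s:ℂ)+((m:ℂ)+1))*(x-I)*S3) = 0 := by
      linear_combination (2*I) * key
        + (-I*(((m:ℂ)+1)*S1 - 2*((s:ℂ)+(m:ℂ)+1)*S2 + (2*(s:ℂ)+(m:ℂ)+1)*S3)) * hzx
        + (z*x*(((m:ℂ)+1)*S1 - 2*((s:ℂ)+(m:ℂ)+1)*S2 + (2*(s:ℂ)+(m:ℂ)+1)*S3)) * hI
    have hfin := (mul_eq_zero.mp hmain).resolve_left hz0
    linear_combination hfin
end

section
/- Let s be a real number with s > −1/2 and s ≠ 0. Set g_0 = 0 and g_k = k/(2(k + s)) for k ≥ 1, so that 0 < g_k < 1 for all k ≥ 1. Define κ_0 = 1 and κ_n = ∏_{k=1}^{n} sqrt((1 − g_{k−1})/g_k) for n ≥ 1, and for x ∈ ℂ with x ≠ i put C_n(x) = κ_n·R_n(x, s), where R_m(x, s) = ∑_{k=0}^{m} [(−m)_k·(s)_k / ((2s)_k·k!)]·(2/(1 + i·x))^k, and set C_{−1} = 0. Then for every n ≥ 0, sqrt((n − 1 + 2s)·n / (4·(n − 1 + s)·(n + s)))·(x + i)·C_{n−1}(x) − x·C_n(x)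 + sqrt((n + 2s)·(n + 1) / (4·(n + s)·(n + 1 + s)))·(x − i)·C_{n+1}(x) = 0, where the coefficient of C_{n−1} equals sqrt((1 − g_{n−1})·g_n) and the coefficient of C_{n+1} equals sqrt((1 − g_n)·g_{n+1}). -/
open Complex Polynomial


noncomputable def cf (s : ℂ) (m k : ℕ) : ℂ :=
  (ascPochhammer ℂ k).eval (-(m:ℂ)) * (ascPochhammer ℂ k).eval s /
    ((ascPochhammer ℂ k).eval (2*s) * (Nat.factorial k : ℂ))

section
variable {s : ℝ} (hs : -(1/2) < s) (hs0 : s ≠ 0)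

private lemma asc_eval_succ (k : ℕ) (y : ℂ) :
    (ascPochhammer ℂ (k+1)).eval y = (ascPochhammer ℂ k).eval y * (y + k) := by
  rw [ascPochhammer_succ_right]; simp

private lemma asc_eval_shift (k : ℕ) (y : ℂ) :
    (ascPochhammer ℂ (k+1)).eval y = y * (ascPochhammer ℂ k).eval (y+1) := by
  rw [ascPochhammer_succ_left]; simp [eval_comp]

private lemma asc_prod (k : ℕ) (y : ℂ) :
    (ascPochhammer ℂ k).eval y = ∏ i ∈ Finset.range k, (y + i) := by
  induction k with
  | zero => simp
  | succ k ih => rw [asc_eval_succ, ih, Finset.prod_range_succ]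

private lemma asc_vanish {m k : ℕ} (h : m < k) :
    (ascPochhammer ℂ k).eval (-(m:ℂ)) = 0 := by
  rw [asc_prod]
  exact Finset.prod_eq_zero (Finset.mem_range.2 h) (by simp)

include hs hs0 in
private lemma asc_2s_ne (k : ℕ) : (ascPochhammer ℂ k).eval (2*(s:ℂ)) ≠ 0 := by
  rw [asc_prod]
  refine Finset.prod_ne_zero_iff.2 (fun i _ => ?_)
  have : ((2*s + i : ℝ) : ℂ) ≠ 0 := by
    rw [Complex.ofReal_ne_zero]
    rcases Nat.eq_zero_or_pos i with h | h
    · simp [h]; intro hc; exact hs0 (by linarith)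
    · have : (1:ℝ) ≤ i := by exact_mod_cast h
      nlinarith
  push_cast at this
  convert this using 2

private lemma poch_rel (k : ℕ) (y : ℂ) :
    y * (ascPochhammer ℂ k).eval (y + 1) = (ascPochhammer ℂ k).eval y * (y + k) := by
  have h1 := asc_eval_shift k y
  have h2 := asc_eval_succ k y
  linear_combination h2 - h1

include hs hs0 in
private lemma key (j k : ℕ) :
    ((j:ℂ)+1) * cf s j (k+1) - 2*((j:ℂ)+1+(s:ℂ)) * cf s (j+1) (k+1)
      + ((j:ℂ)+1+2*(s:ℂ)) * cf s (j+2) (k+1)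
      - ((j:ℂ)+1) * cf s j k + ((j:ℂ)+1+(s:ℂ)) * cf s (j+1) k = 0 := by
  have h1 := poch_rel k (-(j:ℂ)-1)
  have h2 := poch_rel k ((-(j:ℂ)-1)-1)
  rw [show (-(j:ℂ)-1+1) = -(j:ℂ) by ring] at h1
  rw [show ((-(j:ℂ)-1)-1+1) = -(j:ℂ)-1 by ring] at h2
  have e1 : (-(↑(j+1):ℂ)) = -(j:ℂ)-1 := by push_cast; ring
  have e2 : (-(↑(j+2):ℂ)) = (-(j:ℂ)-1)-1 := by push_cast; ring
  set a := (ascPochhammer ℂ k).eval (-(j:ℂ)) with ha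
  set b := (ascPochhammer ℂ k).eval (-(j:ℂ)-1) with hb
  set c := (ascPochhammer ℂ k).eval ((-(j:ℂ)-1)-1) with hc
  set ps := (ascPochhammer ℂ k).eval (s:ℂ) with hps
  set p2 := (ascPochhammer ℂ k).eval (2*(s:ℂ)) with hp2
  have hap : (ascPochhammer ℂ (k+1)).eval (-(j:ℂ)) = a * (-(j:ℂ)+k) := asc_eval_succ k _
  have hbp : (ascPochhammer ℂ (k+1)).eval (-(j:ℂ)-1) = b * (-(j:ℂ)-1+k) := asc_eval_succ k _
  have hcp : (ascPochhammer ℂ (k+1)).eval ((-(j:ℂ)-1)-1) = c * ((-(j:ℂ)-1)-1+k) := asc_eval_succ k _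
  have hpsp : (ascPochhammer ℂ (k+1)).eval (s:ℂ) = ps * ((s:ℂ)+k) := asc_eval_succ k _
  have hp2p : (ascPochhammer ℂ (k+1)).eval (2*(s:ℂ)) = p2 * (2*(s:ℂ)+k) := asc_eval_succ k _
  have hp2ne : p2 ≠ 0 := asc_2s_ne hs hs0 k
  have h2sk : (2*(s:ℂ)+k) ≠ 0 := by
    have := asc_2s_ne hs hs0 (k+1); rw [hp2p] at this
    exact fun h => this (by rw [h, mul_zero])
  have hfac : ((Nat.factorial k : ℂ)) ≠ 0 := by exact_mod_cast (Nat.factorial_pos k).ne'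
  have hk1 : ((k:ℂ)+1) ≠ 0 := by exact_mod_cast (Nat.cast_add_one_ne_zero k : ((k:ℂ)+1) ≠ 0)
  simp only [cf, e1, e2, hap, hbp, hcp, hpsp, hp2p, Nat.factorial_succ, ← ha, ← hb, ← hc, ← hps, ← hp2]
  push_cast
  field_simp
  have h2sk' : (s:ℂ)*2+k ≠ 0 := by rwa [mul_comm]
  field_simp
  linear_combination (ps*(2*(s:ℂ) + k + k*(s:ℂ) + (j:ℂ)*(s:ℂ) + (j:ℂ)*k)) * h1
    - (ps*((s:ℂ)+k)*(1+2*(s:ℂ)+(j:ℂ))) * h2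
private lemma cf_one (s : ℂ) (m : ℕ) : cf s m 0 = 1 := by simp [cf]

private lemma cf_zero (s : ℂ) {m k : ℕ} (h : m < k) : cf s m k = 0 := by
  unfold cf; rw [asc_vanish h]; simp

private lemma sum_ext (s : ℂ) (m N : ℕ) (h : m ≤ N) (z : ℂ) :
    ∑ k ∈ Finset.range (m+1), cf s m k * z^k = ∑ k ∈ Finset.range (N+1), cf s m k * z^k := by
  refine Finset.sum_subset (Finset.range_subset_range.2 (by omega)) (fun k _ hk => ?_)
  rw [cf_zero s (by simpa using Nat.lt_of_succ_le (Nat.succ_le_of_lt (by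
    have := Finset.mem_range.not.1 hk; omega))), zero_mul]

include hs hs0 in
private lemma core (j : ℕ) (z : ℂ) :
    ((j:ℂ)+1)*(1-z)*(∑ k ∈ Finset.range (j+1), cf s j k * z^k)
      - ((j:ℂ)+1+(s:ℂ))*(2-z)*(∑ k ∈ Finset.range (j+2), cf s (j+1) k * z^k)
      + ((j:ℂ)+1+2*(s:ℂ))*(∑ k ∈ Finset.range (j+3), cf s (j+2) k * z^k) = 0 := by
  set p : ℕ → ℂ := fun k => ((j:ℂ)+1)*cf s j k - 2*((j:ℂ)+1+(s:ℂ))*cf s (j+1) k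
      + ((j:ℂ)+1+2*(s:ℂ))*cf s (j+2) k with hp
  set q : ℕ → ℂ := fun k => -((j:ℂ)+1)*cf s j k + ((j:ℂ)+1+(s:ℂ))*cf s (j+1) k with hq
  rw [sum_ext (s:ℂ) j (j+2) (by omega) z, sum_ext (s:ℂ) (j+1) (j+2) (by omega) z]
  have e1 : (j+2)+1 = j+3 := rfl
  rw [← e1]
  calc ((j:ℂ)+1)*(1-z)*(∑ k ∈ Finset.range ((j+2)+1), cf s j k * z^k)
      - ((j:ℂ)+1+(s:ℂ))*(2-z)*(∑ k ∈ Finset.range ((j+2)+1), cf s (j+1) k * z^k)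
      + ((j:ℂ)+1+2*(s:ℂ))*(∑ k ∈ Finset.range ((j+2)+1), cf s (j+2) k * z^k)
      = ∑ k ∈ Finset.range ((j+2)+1), (p k * z^k + q k * z^(k+1)) := by
        rw [Finset.mul_sum, Finset.mul_sum, Finset.mul_sum, ← Finset.sum_sub_distrib,
          ← Finset.sum_add_distrib]
        exact Finset.sum_congr rfl (fun k _ => by simp only [hp, hq]; ring)
    _ = (∑ k ∈ Finset.range ((j+2)+1), p k * z^k)
        + ∑ k ∈ Finset.range ((j+2)+1), q k * z^(k+1) := Finset.sum_add_distrib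
    _ = 0 := by
        rw [Finset.sum_range_succ' (fun k => p k * z^k) (j+2),
          Finset.sum_range_succ (fun k => q k * z^(k+1)) (j+2)]
        have hp0 : p 0 = 0 := by simp [hp, cf_one]; ring
        have hq2 : q (j+2) = 0 := by
          simp [hq, cf_zero s (show j < j+2 by omega), cf_zero s (show j+1 < j+2 by omega)]
        rw [hp0, hq2, zero_mul, add_zero, zero_mul, add_zero, ← Finset.sum_add_distrib]
        refine Finset.sum_eq_zero (fun k _ => ?_)
        have hkey := key hs hs0 j k
        simp only [hp, hq]
        linear_combination z^(k+1) * hkey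
end

/-- The symmetrized (Wall-pencil) form of the recurrence for the
rational functions `C_n(x) = κ_n R_n(x, s)`, where `g_k = k/(2(k+s))`,
`κ_n = ∏_{k=1}^n √((1-g_{k-1})/g_k)`. Indexing of `C` is shifted by one:
`C (n+1)` stands for `C_n` of the paper and `C 0 = C_{-1} = 0`. Then
`√((n-1+2s)n/(4(n-1+s)(n+s)))(x+i)C_{n-1} - xC_n + √((n+2s)(n+1)/(4(n+s)(n+1+s)))(x-i)C_{n+1} = 0`,
and the two square-root coefficients equal `√((1-g_{n-1})g_n)` and `√((1-g_n)g_{n+1})`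
respectively; moreover `0 < g_k < 1` for `k ≥ 1`. -/
theorem pseudo_jacobi_symmetrized_recurrence (s : ℝ) (hs : -(1 / 2) < s) (hs0 : s ≠ 0)
    (g : ℕ → ℝ) (hg0 : g 0 = 0)
    (hgk : ∀ k : ℕ, 1 ≤ k → g k = (k : ℝ) / (2 * ((k : ℝ) + s)))
    (κ : ℕ → ℝ) (hκ0 : κ 0 = 1)
    (hκ : ∀ n : ℕ, 1 ≤ n → κ n = ∏ k ∈ Finset.Icc 1 n, Real.sqrt ((1 - g (k - 1)) / g k))
    (R : ℕ → ℂ → ℂ)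
    (hR : ∀ (m : ℕ) (x : ℂ), R m x = ∑ k ∈ Finset.range (m + 1),
      (ascPochhammer ℂ k).eval (-(m : ℂ)) * (ascPochhammer ℂ k).eval (s : ℂ) /
        ((ascPochhammer ℂ k).eval (2 * (s : ℂ)) * (Nat.factorial k : ℂ)) * (2 / (1 + I * x)) ^ k)
    (C : ℕ → ℂ → ℂ)
    (hC0 : ∀ x : ℂ, C 0 x = 0)
    (hC : ∀ (n : ℕ) (x : ℂ), C (n + 1) x = (κ n : ℂ) * R n x)
    (x : ℂ) (hx : x ≠ I) :
    (∀ k : ℕ, 1 ≤ k → 0 < g k ∧ g k < 1) ∧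
    ∀ n : ℕ,
      (Real.sqrt (((n : ℝ) - 1 + 2 * s) * n / (4 * ((n : ℝ) - 1 + s) * ((n : ℝ) + s))) : ℂ)
          * (x + I) * C n x
        - x * C (n + 1) x
        + (Real.sqrt (((n : ℝ) + 2 * s) * ((n : ℝ) + 1) / (4 * ((n : ℝ) + s) * ((n : ℝ) + 1 + s))) : ℂ)
          * (x - I) * C (n + 2) x = 0 ∧
      Real.sqrt (((n : ℝ) - 1 + 2 * s) * n / (4 * ((n : ℝ) - 1 + s) * ((n : ℝ) + s)))
        = Real.sqrt ((1 - g (n - 1)) * g n) ∧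
      Real.sqrt (((n : ℝ) + 2 * s) * ((n : ℝ) + 1) / (4 * ((n : ℝ) + s) * ((n : ℝ) + 1 + s)))
        = Real.sqrt ((1 - g n) * g (n + 1)) := by
  -- positivity of denominators
  have hks : ∀ k : ℕ, 0 < (k : ℝ) + 1 + s := fun k => by
    have : (0:ℝ) ≤ k := Nat.cast_nonneg k
    linarith
  have hks' : ∀ k : ℕ, 1 ≤ k → 0 < (k : ℝ) + s := fun k hk => by
    have : (1:ℝ) ≤ k := by exact_mod_cast hk
    linarith
  -- part 1
  have part1 : ∀ k : ℕ, 1 ≤ k → 0 < g k ∧ g k < 1 := by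
    intro k hk
    have h1 : (1:ℝ) ≤ k := by exact_mod_cast hk
    have h2 : 0 < (k:ℝ) + s := hks' k hk
    rw [hgk k hk]
    constructor
    · positivity
    · rw [div_lt_one (by positivity)]; linarith
  have gpos : ∀ k : ℕ, 1 ≤ k → 0 < g k := fun k hk => (part1 k hk).1
  have gnn : ∀ k : ℕ, 0 ≤ g k := by
    intro k; cases k with
    | zero => rw [hg0]
    | succ m => exact (gpos (m+1) (Nat.le_add_left 1 m)).le
  have gub : ∀ k : ℕ, g k < 1 := by
    intro k; cases k with
    | zero => rw [hg0]; norm_num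
    | succ m => exact (part1 (m+1) (Nat.le_add_left 1 m)).2
  -- κ recursion and positivity
  have κsucc : ∀ n : ℕ, κ (n+1) = κ n * Real.sqrt ((1 - g n) / g (n+1)) := by
    intro n
    cases n with
    | zero => rw [hκ 1 le_rfl, hκ0]; simp
    | succ m =>
        rw [hκ (m+2) (by omega), hκ (m+1) (by omega),
          Finset.prod_Icc_succ_top (show 1 ≤ m+2 by omega)]
        norm_num
  have κpos : ∀ n : ℕ, 0 < κ n := by
    intro n
    induction n with
    | zero => rw [hκ0]; norm_num
    | succ m ih =>
        rw [κsucc m]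
        have h1 : 0 < (1 - g m) / g (m+1) :=
          div_pos (by linarith [gub m]) (gpos (m+1) (by omega))
        exact mul_pos ih (Real.sqrt_pos.2 h1)
  -- the two sqrt-argument identities
  have argB : ∀ n : ℕ, ((n : ℝ) + 2 * s) * ((n : ℝ) + 1) / (4 * ((n : ℝ) + s) * ((n : ℝ) + 1 + s))
      = (1 - g n) * g (n + 1) := by
    intro n
    cases n with
    | zero =>
        rw [hg0, hgk 1 le_rfl]
        have h1 : (1:ℝ) + s ≠ 0 := by have := hks 0; push_cast at this; intro h; linarith
        push_cast
        simp only [zero_add]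
        field_simp
        ring
    | succ m =>
        rw [hgk (m+1) (by omega), hgk (m+2) (by omega)]
        have hA : (0:ℝ) < (m:ℝ)+1+s := hks m
        have hB : (0:ℝ) < (m:ℝ)+1+1+s := by have := hks (m+1); push_cast at this; linarith
        have hC' : (0:ℝ) < (m:ℝ)+2+s := by linarith
        push_cast
        field_simp [hA.ne', hB.ne', hC'.ne']
        ring
  have conjB : ∀ n : ℕ, Real.sqrt (((n : ℝ) + 2 * s) * ((n : ℝ) + 1) / (4 * ((n : ℝ) + s) * ((n : ℝ) + 1 + s)))
      = Real.sqrt ((1 - g n) * g (n + 1)) := fun n => by rw [argB n]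
  have conjA : ∀ n : ℕ, Real.sqrt (((n : ℝ) - 1 + 2 * s) * n / (4 * ((n : ℝ) - 1 + s) * ((n : ℝ) + s)))
      = Real.sqrt ((1 - g (n - 1)) * g n) := by
    intro n
    cases n with
    | zero => simp [hg0]
    | succ m =>
        have e : ((m+1 : ℕ) : ℝ) - 1 = (m : ℝ) := by push_cast; ring
        have e2 : (m+1) - 1 = m := rfl
        rw [e2]
        rw [show (((m+1 : ℕ)) : ℝ) - 1 + 2*s = (m:ℝ) + 2*s by push_cast; ring,
          show (((m+1 : ℕ)) : ℝ) - 1 + s = (m:ℝ) + s by push_cast; ring,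
          show (((m+1 : ℕ)) : ℝ) + s = (m:ℝ) + 1 + s by push_cast; ring,
          show (((m+1 : ℕ)) : ℝ) = (m:ℝ) + 1 by push_cast; ring]
        rw [argB m]
  refine ⟨part1, fun n => ⟨?_, conjA n, conjB n⟩⟩
  -- complex setup
  set z : ℂ := 2 / (1 + I * x) with hzdef
  have hz : (1:ℂ) + I * x ≠ 0 := fun h => hx (by linear_combination (-I) * h + x * Complex.I_sq)
  have hzm : z * (1 + I * x) = 2 := by rw [hzdef]; exact div_mul_cancel₀ 2 hz
  have hz1 : (x - I) * (1 - z) = x + I := by linear_combination I * hzm - x * z * Complex.I_sq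
  have hz2 : (x - I) * (2 - z) = 2 * x := by linear_combination I * hzm - x * z * Complex.I_sq
  have hRsum : ∀ m : ℕ, R m x = ∑ k ∈ Finset.range (m+1), cf (s:ℂ) m k * z ^ k := by
    intro m; rw [hR m x]; rfl
  have hcore : ∀ j : ℕ, ((j:ℂ)+1)*(1-z)*R j x - ((j:ℂ)+1+(s:ℂ))*(2-z)*R (j+1) x
      + ((j:ℂ)+1+2*(s:ℂ))*R (j+2) x = 0 := by
    intro j
    rw [hRsum j, hRsum (j+1), hRsum (j+2)]
    exact core hs hs0 j z
  cases n with
  | zero =>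
      have hg1 : 0 < g 1 := gpos 1 le_rfl
      have hR0 : R 0 x = 1 := by rw [hRsum 0]; simp [cf]
      have hR1 : R 1 x = 1 - z / 2 := by
        rw [hRsum 1, Finset.sum_range_succ, Finset.sum_range_one]
        have hsC : (s:ℂ) ≠ 0 := Complex.ofReal_ne_zero.2 hs0
        simp [cf, ascPochhammer_one]
        field_simp
        ring
      have hprod : Real.sqrt ((1 - g 0) * g 1) * κ 1 = 1 := by
        rw [κsucc 0, hκ0, one_mul, hg0, sub_zero, one_mul, one_div, Real.sqrt_inv]
        exact mul_inv_cancel₀ (Real.sqrt_ne_zero'.2 hg1)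
      have hprodC : ((Real.sqrt ((1 - g 0) * g 1) : ℝ) : ℂ) * ((κ 1 : ℝ) : ℂ) = 1 := by
        exact_mod_cast congrArg (fun t : ℝ => (t : ℂ)) hprod
      rw [hC0, hC 0 x, hC 1 x, hκ0, hR0, hR1, conjB 0, Complex.ofReal_one]
      linear_combination ((x - I) * (1 - z/2)) * hprodC + (1/2 : ℂ) * hz2
  | succ m =>
      have hgm1 : 0 < g (m+1) := gpos (m+1) (by omega)
      have hgm2 : 0 < g (m+2) := gpos (m+2) (by omega)
      have hum : 0 ≤ 1 - g (m+1) := by linarith [gub (m+1)]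
      have E1 : Real.sqrt ((1 - g m) * g (m+1)) * κ m = g (m+1) * κ (m+1) := by
        rw [κsucc m,
          show (1 - g m) * g (m+1) = (g (m+1))^2 * ((1 - g m) / g (m+1)) by
            field_simp [hgm1.ne']]
        rw [Real.sqrt_mul (sq_nonneg _), Real.sqrt_sq hgm1.le]
        ring
      have E2 : Real.sqrt ((1 - g (m+1)) * g (m+2)) * κ (m+2) = (1 - g (m+1)) * κ (m+1) := by
        rw [κsucc (m+1), ← mul_assoc,
          show Real.sqrt ((1 - g (m+1)) * g (m+2)) * κ (m+1) = κ (m+1) * Real.sqrt ((1 - g (m+1)) * g (m+2)) by ring,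
          mul_assoc, ← Real.sqrt_mul (by positivity : (0:ℝ) ≤ (1 - g (m+1)) * g (m+2)),
          show (1 - g (m+1)) * g (m+2) * ((1 - g (m+1)) / g (m+2)) = (1 - g (m+1))^2 by
            field_simp,
          Real.sqrt_sq hum]
        ring
      have E1C : ((Real.sqrt ((1 - g m) * g (m+1)) : ℝ) : ℂ) * ((κ m : ℝ) : ℂ)
          = ((g (m+1) : ℝ) : ℂ) * ((κ (m+1) : ℝ) : ℂ) := by exact_mod_cast congrArg (fun t : ℝ => (t : ℂ)) E1
      have E2C : ((Real.sqrt ((1 - g (m+1)) * g (m+2)) : ℝ) : ℂ) * ((κ (m+2) : ℝ) : ℂ)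
          = (1 - ((g (m+1) : ℝ) : ℂ)) * ((κ (m+1) : ℝ) : ℂ) := by
        have := congrArg (fun t : ℝ => (t : ℂ)) E2
        push_cast at this
        exact_mod_cast this
      have G1R : 2 * ((m:ℝ) + 1 + s) * g (m+1) = (m:ℝ) + 1 := by
        rw [hgk (m+1) (by omega)]
        have := hks m
        push_cast
        field_simp
      have G1 : 2 * ((m:ℂ) + 1 + (s:ℂ)) * ((g (m+1) : ℝ) : ℂ) = (m:ℂ) + 1 := by
        exact_mod_cast G1R
      have hdne : (2 * ((m:ℂ) + 1 + (s:ℂ))) ≠ 0 := by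
        have h0 : ((2 * ((m:ℝ) + 1 + s) : ℝ) : ℂ) ≠ 0 := by
          rw [Complex.ofReal_ne_zero]
          have := hks m; positivity
        push_cast at h0
        exact h0
      have hcm := hcore m
      rw [hC m x, hC (m+1) x, hC (m+2) x, conjA (m+1), conjB (m+1),
        show (m+1) - 1 = m from rfl]
      apply mul_left_cancel₀ hdne
      rw [mul_zero]
      linear_combination (2*((m:ℂ)+1+(s:ℂ))*(x+I)*(R m x)) * E1C
        + (((κ (m+1) : ℝ) : ℂ)*(x+I)*(R m x) - ((κ (m+1) : ℝ) : ℂ)*(x-I)*(R (m+2) x)) * G1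
        - (((κ (m+1) : ℝ) : ℂ)*((m:ℂ)+1)*(R m x)) * hz1
        + (((κ (m+1) : ℝ) : ℂ)*((m:ℂ)+1+(s:ℂ))*(R (m+1) x)) * hz2
        + (2*((m:ℂ)+1+(s:ℂ))*(x-I)*(R (m+2) x)) * E2C
        + (((κ (m+1) : ℝ) : ℂ)*(x-I)) * hcm
end
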